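/- Let G be a group, let k ≥ 2 and n ≥ 1, let a : ZMod k → G be injective, let b : Fin (2n) → G be injective, let P be a pairing involution on (ZMod k) × Fin (2n), and suppose there is a finite set A ⊆ Fin (2n) with A.card = n giving a cyclic-bipartite structure: for every i : ZMod k and every x ∈ A, the partner P (i, x) has first coordinate i + 1 and second coordinate not in A. If a i * b j = a (P (i,j)).1 * b (P (i,j)).2 for every cell (i,j), then G contains a nontrivial element of finite order, i.e., there exists g ∈ G with g ≠ 1 and IsOfFinOrder g. -/

import Mathlib

/-!
Put `c i = (a (i + 1))⁻¹ * a i`. For `x ∈ A` the relation at the cell `(i, x)` reads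
`b y = c i * b x`, where `y ∉ A` is the column of the partner; by counting, each row's partner
columns of `A` exhaust the complement of `A`. If all `c i` agree, they telescope around the cycle
`ZMod k` to `c 0 ^ k = 1`, while `c 0 ≠ 1` since `a` is injective. Otherwise some
`d = (c 0)⁻¹ * c i` is nontrivial, and going from row `i` forward and back through row `0` shows
that left multiplication by `d` maps the finite nonempty set `b '' A` into itself, which forces `d`
to have finite order.
-/

open Finset Function

section Torsion

variable {G : Type*} [Group G]

theorem pow_eq_inv_mul_of_forall_inv_mul_add_one_eq {R : Type*} [AddMonoidWithOne R]
    {a : R → G} {c : G} (h : ∀ i, (a (i + 1))⁻¹ * a i = c) (m : ℕ) :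
    c ^ m = (a m)⁻¹ * a 0 := by
  induction m with
  | zero => simp
  | succ m ih => rw [pow_succ', ih, ← h m, Nat.cast_succ]; group

theorem isOfFinOrder_of_forall_inv_mul_add_one_eq {k : ℕ} [NeZero k] {a : ZMod k → G} {c : G}
    (h : ∀ i, (a (i + 1))⁻¹ * a i = c) : IsOfFinOrder c :=
  isOfFinOrder_iff_pow_eq_one.2 ⟨k, Nat.pos_of_neZero k, by
    rw [pow_eq_inv_mul_of_forall_inv_mul_add_one_eq h, ZMod.natCast_self, inv_mul_cancel]⟩

theorem isOfFinOrder_of_mapsTo_mul_left {g : G} {S : Set G} (hS : S.Finite) (hne : S.Nonempty)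
    (hg : Set.MapsTo (g * ·) S S) : IsOfFinOrder g := by
  obtain ⟨s, hs⟩ := hne
  have hpow : ∀ m : ℕ, g ^ m * s ∈ S := fun m => by
    simpa only [mul_left_iterate] using hg.iterate m hs
  obtain ⟨m, n, hmn, heq⟩ := hS.exists_lt_map_eq_of_forall_mem hpow
  rw [← not_not (a := IsOfFinOrder g), ← injective_pow_iff_not_isOfFinOrder]
  exact fun hinj => hmn.ne (hinj (mul_right_cancel heq))

end Torsion

theorem surjOn_partner_snd_compl {R ι : Type*} [Add R] [One R] [Fintype ι]
    [DecidableEq ι] {P : R × ι → R × ι} (hP : Injective P) {A : Finset ι}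
    (hA : 2 * #A = Fintype.card ι)
    (hbip : ∀ (i : R) (x : ι), x ∈ A → (P (i, x)).1 = i + 1 ∧ (P (i, x)).2 ∉ A) (i : R) :
    Set.SurjOn (fun x => (P (i, x)).2) A ↑Aᶜ := by
  refine surjOn_of_injOn_of_card_le _ (fun x hx => by simpa using (hbip i x hx).2) ?_ ?_
  · intro x hx x' hx' hxx'
    have hrow : (P (i, x)).1 = (P (i, x')).1 := (hbip i x hx).1.trans (hbip i x' hx').1.symm
    exact congrArg Prod.snd (hP (Prod.ext hrow hxx'))
  · rw [card_compl]
    omega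

theorem cyclic_bipartite_pairing_has_torsion_general
    {G : Type*} [Group G] (k n : ℕ) (hk : 2 ≤ k) (hn : 1 ≤ n)
    (a : ZMod k → G) (b : Fin (2 * n) → G)
    (ha : Function.Injective a)
    (P : ZMod k × Fin (2 * n) → ZMod k × Fin (2 * n))
    (hP_invol : ∀ p, P (P p) = p)
    (A : Finset (Fin (2 * n))) (hA : A.card = n)
    (hbip : ∀ (i : ZMod k) (x : Fin (2 * n)), x ∈ A →
      (P (i, x)).1 = i + 1 ∧ (P (i, x)).2 ∉ A)
    (hrel : ∀ p : ZMod k × Fin (2 * n), a p.1 * b p.2 = a (P p).1 * b (P p).2) :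
    ∃ g : G, g ≠ 1 ∧ IsOfFinOrder g := by
  have : Fact (1 < k) := ⟨hk⟩
  set c : ZMod k → G := fun i => (a (i + 1))⁻¹ * a i with hc
  by_cases hconst : ∀ i, c i = c 0
  · refine ⟨c 0, ?_, isOfFinOrder_of_forall_inv_mul_add_one_eq hconst⟩
    rw [hc, Ne, inv_mul_eq_one, zero_add]
    exact fun h => one_ne_zero (ha h)
  obtain ⟨i, hi⟩ := not_forall.1 hconst
  have hstep : ∀ j, ∀ x ∈ A, b (P (j, x)).2 = c j * b x := fun j x hx => by
    rw [hc, mul_assoc, hrel (j, x), (hbip j x hx).1, inv_mul_cancel_left]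
  have hsurj := surjOn_partner_snd_compl (Involutive.injective hP_invol)
    (by rw [hA, Fintype.card_fin]) hbip
  refine ⟨(c 0)⁻¹ * c i, by rwa [Ne, inv_mul_eq_one, eq_comm], ?_⟩
  refine isOfFinOrder_of_mapsTo_mul_left (A.finite_toSet.image b)
    ((coe_nonempty.2 (card_pos.1 (by omega))).image b) ?_
  rintro _ ⟨x, hx, rfl⟩
  obtain ⟨x', hx', hxx'⟩ := hsurj 0 (by simpa using (hbip i x hx).2)
  refine ⟨x', hx', ?_⟩
  beta_reduce at hxx' ⊢
  rw [mul_assoc, ← hstep i x hx, ← hxx', hstep 0 x' hx', inv_mul_cancel_left]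

/-- Generalization of the main theorem (Remark): if a group `G` contains distinct
elements `a_i` (indexed cyclically by `ZMod k`, `k ≥ 2`) and distinct `b_j`
(`j : Fin (2n)`) satisfying the relations of a pairing involution admitting a
cyclic-bipartite structure, then `G` contains a nontrivial element of finite order. -/
theorem cyclic_bipartite_pairing_has_torsion
    {G : Type*} [Group G] (k n : ℕ) (hk : 2 ≤ k) (hn : 1 ≤ n)
    (a : ZMod k → G) (b : Fin (2 * n) → G)
    (ha : Function.Injective a) (hb : Function.Injective b)
    (P : ZMod k × Fin (2 * n) → ZMod k × Fin (2 * n))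
    (hP_invol : ∀ p, P (P p) = p)
    (hP_nofix : ∀ p, P p ≠ p)
    (hP_row : ∀ p, (P p).1 ≠ p.1)
    (hP_col : ∀ p, (P p).2 ≠ p.2)
    (A : Finset (Fin (2 * n))) (hA : A.card = n)
    (hbip : ∀ (i : ZMod k) (x : Fin (2 * n)), x ∈ A →
      (P (i, x)).1 = i + 1 ∧ (P (i, x)).2 ∉ A)
    (hrel : ∀ p : ZMod k × Fin (2 * n), a p.1 * b p.2 = a (P p).1 * b (P p).2) :
    ∃ g : G, g ≠ 1 ∧ IsOfFinOrder g :=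
  cyclic_bipartite_pairing_has_torsion_general k n hk hn a b ha P hP_invol A hA hbip hrel
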